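/- If A = (a_1,...,a_m)^T ∈ R^{m×d} is phase retrievable on R^d and d ≥ 1, then m ≥ 2d - 1. -/

import Mathlib

/-! If `m ≤ 2d - 2`, split the `m` measurement vectors into two groups of at most `d - 1`.
Each group has a nonzero common orthogonal vector, `u` for the first and `v` for the second.
Every measurement then kills `u` or `v`, so it cannot tell `u + v` from `u - v`,
although these differ up to sign whenever `u, v ≠ 0`. -/

open Finset

theorem Finset.exists_card_le_and_card_compl_le {ι : Type*} [Fintype ι] [DecidableEq ι] {k : ℕ}
    (h : Fintype.card ι ≤ 2 * k) : ∃ s : Finset ι, #s ≤ k ∧ #sᶜ ≤ k := by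
  obtain ⟨s, -, hs⟩ := exists_subset_card_eq (min_le_right k #(univ : Finset ι))
  rw [card_univ] at hs
  exact ⟨s, by omega, by rw [card_compl]; omega⟩

theorem exists_ne_zero_forall_dotProduct_eq_zero {K ι n : Type*} [Field K] [Fintype n]
    (a : ι → n → K) (s : Finset ι) (hs : #s < Fintype.card n) :
    ∃ u ≠ 0, ∀ j ∈ s, a j ⬝ᵥ u = 0 := by
  let M : Matrix s n K := fun j => a j
  have hker : LinearMap.ker M.mulVecLin ≠ ⊥ :=
    LinearMap.ker_ne_bot_of_finrank_lt (by simpa using hs)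
  obtain ⟨u, hu, hu0⟩ := Submodule.exists_mem_ne_zero_of_ne_bot hker
  exact ⟨u, hu0, fun j hj => congrFun hu ⟨j, hj⟩⟩

theorem abs_dotProduct_add_eq_abs_dotProduct_sub {R n : Type*} [Ring R] [Lattice R] [Fintype n]
    {w u v : n → R} (h : w ⬝ᵥ u = 0 ∨ w ⬝ᵥ v = 0) : |w ⬝ᵥ (u + v)| = |w ⬝ᵥ (u - v)| := by
  rcases h with h | h <;> simp [dotProduct_add, dotProduct_sub, h]

section PhaseRetrievable

variable {K ι n : Type*} [Field K] [LinearOrder K] [Fintype n]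

def PhaseRetrievable (a : ι → n → K) : Prop :=
  ∀ x y : n → K, (∀ j, |a j ⬝ᵥ x| = |a j ⬝ᵥ y|) → y = x ∨ y = -x

theorem PhaseRetrievable.two_mul_card_sub_one_le [IsStrictOrderedRing K] [Fintype ι] {a : ι → n → K}
    (h : PhaseRetrievable a) : 2 * Fintype.card n - 1 ≤ Fintype.card ι := by
  classical
  by_contra! hlt
  obtain ⟨s, hs, hsc⟩ :=
    Finset.exists_card_le_and_card_compl_le (ι := ι) (k := Fintype.card n - 1) (by omega)
  obtain ⟨u, hu0, hu⟩ := exists_ne_zero_forall_dotProduct_eq_zero a s (by omega)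
  obtain ⟨v, hv0, hv⟩ := exists_ne_zero_forall_dotProduct_eq_zero a sᶜ (by omega)
  have hsplit : ∀ j, a j ⬝ᵥ u = 0 ∨ a j ⬝ᵥ v = 0 := fun j => by
    by_cases hj : j ∈ s
    · exact .inl (hu j hj)
    · exact .inr (hv j (mem_compl.2 hj))
  rcases h (u + v) (u - v) fun j => abs_dotProduct_add_eq_abs_dotProduct_sub (hsplit j) with
    heq | heq
  · exact hv0 (by simpa [neg_eq_self] using congrArg (· - u) heq)
  · exact hu0 (by simpa [self_eq_neg] using congrArg (· + v) heq)

end PhaseRetrievable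

theorem stmt_1_general {m d : ℕ} (a : Fin m → Fin d → ℝ)
    (hPR : ∀ x y : Fin d → ℝ,
      (∀ j, |dotProduct (a j) x| = |dotProduct (a j) y|) →
      y = x ∨ y = -x) :
    m ≥ 2 * d - 1 := by
  simpa using PhaseRetrievable.two_mul_card_sub_one_le (show PhaseRetrievable a from hPR)

theorem stmt_1 {m d : ℕ} (hd : 1 ≤ d) (a : Fin m → Fin d → ℝ)
    (hPR : ∀ x y : Fin d → ℝ,
      (∀ j, |dotProduct (a j) x| = |dotProduct (a j) y|) →
      y = x ∨ y = -x) :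
    m ≥ 2 * d - 1 :=
  stmt_1_general a hPR
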